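/- arXiv:2504.15276 — 5 statements merged into one kernel-verified Lean document; each statement's English description precedes it below -/
import Mathlib

section
/- Let c = (1+√5)/2 be the golden ratio. Then the minimum over x ∈ [0,1] of the function (1/(2(1+x))) · (1 + c^(-(1-x)) + 2·√(1 - c^(-x)) · c^(-(1-x)/2)) equals (1+√5)/4 = c/2. -/
/-!
Write `v = φ^(-x)`, `w = φ^(-(1-x))` and `s = √((1 - v) w)`. Since `v w = φ⁻¹ = φ - 1`, the
numerator `1 + w + 2 s` equals `φ + s² + 2 s`, so the claim is `φ x ≤ s² + 2 s`. The chord bound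
for the convex function `x ↦ φ^(-x)` (Bernoulli) gives `v ≤ 1 - x / φ²`, i.e.
`x (1 + φ s²) ≤ φ³ s²`, and the remaining one-variable inequality follows from
`φ (s² + 2 s) (1 + φ s²) - φ⁵ s² = s (φ s - 1)² (s + 2 φ)`.
Equality holds at both endpoints: `x = 0` (`s = 0`) and `x = 1` (`s = 1/φ`).
-/

open Real goldenRatio

theorem rpow_neg_le_one_add_mul_inv_sub_one {b x : ℝ} (hb : 0 < b) (hx0 : 0 ≤ x) (hx1 : x ≤ 1) :
    b ^ (-x) ≤ 1 + x * (b⁻¹ - 1) := by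
  have h := rpow_one_add_le_one_add_mul_self (s := b⁻¹ - 1) (by linarith [inv_pos.2 hb]) hx0 hx1
  rwa [add_sub_cancel, inv_rpow hb.le, ← rpow_neg hb.le] at h

theorem inv_eq_sub_one_of_sq_eq_add_one {c : ℝ} (hc : c ^ 2 = c + 1) : c⁻¹ = c - 1 :=
  inv_eq_of_mul_eq_one_right (by linear_combination hc)

theorem mul_le_sq_add_two_mul_of_sq_eq_add_one {c x s : ℝ} (hc : c ^ 2 = c + 1) (hc0 : 0 < c)
    (hs : 0 ≤ s) (h : x * (1 + c * s ^ 2) ≤ c ^ 3 * s ^ 2) : c * x ≤ s ^ 2 + 2 * s := by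
  have key : c * (s ^ 2 + 2 * s) * (1 + c * s ^ 2) - c ^ 5 * s ^ 2 =
      s * (c * s - 1) ^ 2 * (s + 2 * c) := by
    linear_combination (4 * s ^ 2 - 2 * c * s ^ 3 - s ^ 2 * (c ^ 3 + c ^ 2 + 2 * c + 3)) * hc
  refine le_of_mul_le_mul_right ?_ (by positivity : 0 < c * (1 + c * s ^ 2))
  calc c * x * (c * (1 + c * s ^ 2)) = c ^ 2 * (x * (1 + c * s ^ 2)) := by ring
    _ ≤ c ^ 2 * (c ^ 3 * s ^ 2) := by gcongr
    _ ≤ (s ^ 2 + 2 * s) * (c * (1 + c * s ^ 2)) := by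
      have : 0 ≤ s * (c * s - 1) ^ 2 * (s + 2 * c) := by positivity
      linarith

theorem mul_one_add_le_of_sq_eq_add_one {c x : ℝ} (hc : c ^ 2 = c + 1) (hc0 : 0 < c)
    (hx0 : 0 ≤ x) (hx1 : x ≤ 1) :
    c * (1 + x) ≤ 1 + c ^ (-(1 - x)) + 2 * √(1 - c ^ (-x)) * c ^ (-(1 - x) / 2) := by
  have hc1 : 1 ≤ c := by nlinarith
  have hinv := inv_eq_sub_one_of_sq_eq_add_one hc
  set v := c ^ (-x)
  set w := c ^ (-(1 - x))
  have hw : 0 ≤ w := rpow_nonneg hc0.le _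
  have hv1 : v ≤ 1 := rpow_le_one_of_one_le_of_nonpos hc1 (by linarith)
  have hvw : v * w = c - 1 := by
    rw [← rpow_add hc0, show -x + -(1 - x) = -1 by ring, rpow_neg_one, hinv]
  have hbern : v ≤ 1 + x * (c - 1 - 1) :=
    hinv ▸ rpow_neg_le_one_add_mul_inv_sub_one hc0 hx0 hx1
  have hsqrt : c ^ (-(1 - x) / 2) = √w := by
    rw [sqrt_eq_rpow, ← rpow_mul hc0.le]
    ring_nf
  set s := √((1 - v) * w)
  have hs : √(1 - v) * √w = s := (sqrt_mul' _ hw).symm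
  have hs2 : s ^ 2 = (1 - v) * w := sq_sqrt (mul_nonneg (by linarith) hw)
  have key : c * x ≤ s ^ 2 + 2 * s := by
    refine mul_le_sq_add_two_mul_of_sq_eq_add_one hc hc0 (sqrt_nonneg _) ?_
    have hbern' := mul_le_mul_of_nonneg_left hbern (mul_nonneg (pow_nonneg hc0.le 3) hw)
    rw [hs2]
    linear_combination hbern' - x * c * hvw - (x - x * w * c * (c - 1)) * hc
  rw [hsqrt, mul_assoc, hs]
  linarith

theorem epr_min_problem :
    IsLeast
      ((fun x : ℝ =>
          (1 / (2 * (1 + x))) *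
            (1 + ((1 + Real.sqrt 5) / 2) ^ (-(1 - x)) +
              2 * Real.sqrt (1 - ((1 + Real.sqrt 5) / 2) ^ (-x)) *
                ((1 + Real.sqrt 5) / 2) ^ (-(1 - x) / 2))) '' Set.Icc (0 : ℝ) 1)
      ((1 + Real.sqrt 5) / 4) := by
  rw [show (1 + √5) / 4 = φ / 2 by ring]
  show IsLeast ((fun x : ℝ => 1 / (2 * (1 + x)) *
    (1 + φ ^ (-(1 - x)) + 2 * √(1 - φ ^ (-x)) * φ ^ (-(1 - x) / 2))) '' Set.Icc 0 1) (φ / 2)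
  refine ⟨⟨0, Set.left_mem_Icc.2 zero_le_one, ?_⟩, ?_⟩
  · simp only [sub_zero, neg_zero, rpow_zero, sub_self, sqrt_zero, rpow_neg_one,
      inv_eq_sub_one_of_sq_eq_add_one goldenRatio_sq]
    ring
  · rintro _ ⟨x, ⟨hx0, hx1⟩, rfl⟩
    have h := mul_one_add_le_of_sq_eq_add_one goldenRatio_sq goldenRatio_pos hx0 hx1
    dsimp only
    rw [one_div_mul_eq_div, le_div_iff₀ (by positivity)]
    linarith
end

section
/- Let c = (1+√5)/2 and define f(x) = c²(x+c)² - 4cx - 4 + c^(2x-2) - 2·c^x·(x+c). Then f is convex on the interval [0,1], i.e., its second derivative f''(x) = 2c² + 4(ln c)²·c^(2x-2) - 2·c^x·(ln c)·((x+c)·ln c + 2) is nonnegative for all x ∈ [0,1]. -/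
/-!
For `a ≥ 1` and `0 ≤ x ≤ 1`, in the second derivative
`2a² + 4(log a)² a^(2x-2) - 2a^x log a ((x+a) log a + 2)` the middle term is nonnegative and the
last is at most `2a log a ((1+a) log a + 2)`, so convexity on `[0, 1]` follows once
`log a ((1+a) log a + 2) ≤ a`. For the golden ratio this needs only `1.61 < φ` and
`log φ ≤ 0.49`, the latter from four terms of the exponential series.
-/

open Real

namespace GoldenConvexity

noncomputable def F (a x : ℝ) : ℝ :=
  a ^ 2 * (x + a) ^ 2 - 4 * a * x - 4 + a ^ (2 * x - 2) - 2 * a ^ x * (x + a)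

noncomputable def F' (a x : ℝ) : ℝ :=
  2 * a ^ 2 * (x + a) - 4 * a + 2 * log a * a ^ (2 * x - 2) - 2 * a ^ x * (log a * (x + a) + 1)

noncomputable def F'' (a x : ℝ) : ℝ :=
  2 * a ^ 2 + 4 * log a ^ 2 * a ^ (2 * x - 2) - 2 * a ^ x * log a * ((x + a) * log a + 2)

variable {a : ℝ}

lemma hasDerivAt_rpow_two_mul_sub_two (ha : 0 < a) (x : ℝ) :
    HasDerivAt (fun x => a ^ (2 * x - 2)) (2 * log a * a ^ (2 * x - 2)) x := by
  refine ((((hasDerivAt_id' x).const_mul 2).sub_const 2).const_rpow ha).congr_deriv ?_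
  ring

lemma hasDerivAt_F (ha : 0 < a) (x : ℝ) : HasDerivAt (F a) (F' a x) x := by
  have hpow := (hasStrictDerivAt_const_rpow ha x).hasDerivAt
  have hlin := (hasDerivAt_id' x).add_const a
  have h := ((((hlin.pow 2).const_mul (a ^ 2)).sub ((hasDerivAt_id' x).const_mul (4 * a))).sub_const
    4).add (hasDerivAt_rpow_two_mul_sub_two ha x) |>.sub ((hpow.const_mul 2).mul hlin)
  exact h.congr_deriv (by simp only [F']; ring)

lemma hasDerivAt_F' (ha : 0 < a) (x : ℝ) : HasDerivAt (F' a) (F'' a x) x := by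
  have hpow := (hasStrictDerivAt_const_rpow ha x).hasDerivAt
  have hlin := (hasDerivAt_id' x).add_const a
  have h := (((hlin.const_mul (2 * a ^ 2)).sub_const (4 * a)).add
    ((hasDerivAt_rpow_two_mul_sub_two ha x).const_mul (2 * log a))).sub
      ((hpow.const_mul 2).mul ((hlin.const_mul (log a)).add_const 1))
  exact h.congr_deriv (by simp only [F'']; ring)

lemma F''_nonneg (ha : 1 ≤ a) (hlog : log a * ((1 + a) * log a + 2) ≤ a) {x : ℝ}
    (hx : x ∈ Set.Icc (0 : ℝ) 1) : 0 ≤ F'' a x := by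
  have hL : 0 ≤ log a := log_nonneg ha
  have hax : a ^ x ≤ a := by simpa using rpow_le_rpow_of_exponent_le ha hx.2
  have hbound : a ^ x * log a * ((x + a) * log a + 2) ≤ a * log a * ((1 + a) * log a + 2) := by
    have : 0 ≤ x + a := by linarith [hx.1]
    gcongr
    exact hx.2
  have : a * (log a * ((1 + a) * log a + 2)) ≤ a * a := by gcongr
  have : 0 ≤ log a ^ 2 * a ^ (2 * x - 2) := by positivity
  unfold F''
  linarith

lemma convexOn_F (ha : 1 ≤ a) (hlog : log a * ((1 + a) * log a + 2) ≤ a) :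
    ConvexOn ℝ (Set.Icc 0 1) (F a) := by
  have ha₀ : 0 < a := by linarith
  exact convexOn_of_hasDerivWithinAt2_nonneg (convex_Icc 0 1)
    (fun x _ => (hasDerivAt_F ha₀ x).continuousAt.continuousWithinAt)
    (fun x _ => (hasDerivAt_F ha₀ x).hasDerivWithinAt)
    (fun x _ => (hasDerivAt_F' ha₀ x).hasDerivWithinAt)
    fun x hx => F''_nonneg ha hlog (interior_subset hx)

end GoldenConvexity

open goldenRatio

lemma goldenRatio_gt_d2 : (1.61 : ℝ) < φ := by
  have : (2.22 : ℝ) < √5 := by rw [lt_sqrt (by norm_num)]; norm_num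
  unfold goldenRatio
  linarith

lemma goldenRatio_lt_d2 : φ < 1.62 := by
  have : √5 < 2.24 := by rw [sqrt_lt' (by norm_num)]; norm_num
  unfold goldenRatio
  linarith

lemma log_goldenRatio_le_d2 : log φ ≤ 0.49 := by
  rw [log_le_iff_le_exp goldenRatio_pos]
  calc φ ≤ 1.62 := goldenRatio_lt_d2.le
    _ ≤ ∑ i ∈ Finset.range 4, (0.49 : ℝ) ^ i / i.factorial := by
      norm_num [Finset.sum_range_succ, Nat.factorial]
    _ ≤ exp 0.49 := sum_le_exp_of_nonneg (by norm_num) 4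

lemma log_goldenRatio_mul_le : log φ * ((1 + φ) * log φ + 2) ≤ φ := by
  have hL : 0 ≤ log φ := log_nonneg one_lt_goldenRatio.le
  have h := goldenRatio_gt_d2
  calc log φ * ((1 + φ) * log φ + 2) ≤ 0.49 * ((1 + φ) * 0.49 + 2) := by
        gcongr <;> exact log_goldenRatio_le_d2
    _ ≤ φ := by linarith

theorem f_convex_on_Icc :
    (ConvexOn ℝ (Set.Icc (0 : ℝ) 1)
      (fun x : ℝ =>
        ((1 + Real.sqrt 5) / 2) ^ 2 * (x + (1 + Real.sqrt 5) / 2) ^ 2 -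
          4 * ((1 + Real.sqrt 5) / 2) * x - 4 +
          ((1 + Real.sqrt 5) / 2) ^ (2 * x - 2) -
          2 * ((1 + Real.sqrt 5) / 2) ^ x * (x + (1 + Real.sqrt 5) / 2))) ∧
    (∀ x ∈ Set.Icc (0 : ℝ) 1,
      0 ≤ 2 * ((1 + Real.sqrt 5) / 2) ^ 2 +
          4 * (Real.log ((1 + Real.sqrt 5) / 2)) ^ 2 *
            ((1 + Real.sqrt 5) / 2) ^ (2 * x - 2) -
          2 * ((1 + Real.sqrt 5) / 2) ^ x * Real.log ((1 + Real.sqrt 5) / 2) *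
            ((x + (1 + Real.sqrt 5) / 2) * Real.log ((1 + Real.sqrt 5) / 2) + 2)) :=
  ⟨GoldenConvexity.convexOn_F one_lt_goldenRatio.le log_goldenRatio_mul_le,
    fun _ hx => GoldenConvexity.F''_nonneg one_lt_goldenRatio.le log_goldenRatio_mul_le hx⟩
end

section
/- Let c = (1+√5)/2 and define f(x) = c²(x+c)² - 4cx - 4 + c^(2x-2) - 2·c^x·(x+c). Then f(x) ≤ 0 for all x ∈ [0,1]. -/
/-!
Put `p = φ ^ (x - 1)`, so that `φ ^ x = φ p` and `φ ^ (2x - 2) = p²`; the expression becomes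
`(φ (x + φ) - p)² - 4 (φ x + 1)`. Bernoulli's inequality gives `φ ^ (1 - x) ≤ (1 - x) φ + x`, hence
`p ≥ 1 / ((1 - x) φ + x)`, while `p ≤ 1`. Thus `0 < φ (x + φ) - p ≤ φ x + φ² - 1 / ((1 - x) φ + x)`,
and the square of the right-hand side is at most `4 (φ x + 1)`: after clearing the denominator the
difference factors, thanks to `φ² = φ + 1`, as `x (1 - x)² (4 (φ - 1) - x) ≥ 0`.
-/

open Real goldenRatio

lemma inv_le_rpow_sub_one {c x : ℝ} (hc : 0 < c) (hx0 : 0 ≤ x) (hx1 : x ≤ 1) :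
    ((1 - x) * c + x)⁻¹ ≤ c ^ (x - 1) := by
  have hbernoulli : c ^ (1 - x) ≤ (1 - x) * c + x := by
    have := rpow_one_add_le_one_add_mul_self (s := c - 1) (by linarith) (sub_nonneg.2 hx1)
      (by linarith)
    rw [add_sub_cancel] at this
    linarith
  rw [show x - 1 = -(1 - x) by ring, rpow_neg hc.le]
  exact inv_anti₀ (rpow_pos_of_pos hc _) hbernoulli

lemma goldenRatio_sq_mul_sub_sq_eq (x : ℝ) :
    4 * ((1 - x) * φ + x) ^ 2 * (φ * x + 1) - ((φ * x + φ ^ 2) * ((1 - x) * φ + x) - 1) ^ 2 =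
      x * (1 - x) ^ 2 * (4 * (φ - 1) - x) := by
  linear_combination (1 - 4 * x + 3 * x ^ 2 - 2 * x ^ 3 - x ^ 4
    + φ * (-1 - 5 * x ^ 2 + 2 * x ^ 3 + x ^ 4)
    + φ ^ 2 * (-2 - 2 * x ^ 2 + 4 * x ^ 3 - x ^ 4)
    + φ ^ 3 * (-1 - 2 * x + 5 * x ^ 2 - 2 * x ^ 3)
    + φ ^ 4 * (-1 + 2 * x - x ^ 2)) * goldenRatio_sq

lemma sq_goldenRatio_mul_add_sub_inv_le {x : ℝ} (hx0 : 0 ≤ x) (hx1 : x ≤ 1) :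
    (φ * x + φ ^ 2 - ((1 - x) * φ + x)⁻¹) ^ 2 ≤ 4 * (φ * x + 1) := by
  have hq : 0 < (1 - x) * φ + x := by nlinarith [one_lt_goldenRatio]
  have hfactor_nonneg : 0 ≤ x * (1 - x) ^ 2 * (4 * (φ - 1) - x) := by
    have : 0 ≤ 4 * (φ - 1) - x := by nlinarith [goldenRatio_sq, one_lt_goldenRatio]
    positivity
  have hcleared : ((1 - x) * φ + x) ^ 2 *
      (4 * (φ * x + 1) - (φ * x + φ ^ 2 - ((1 - x) * φ + x)⁻¹) ^ 2) =
        x * (1 - x) ^ 2 * (4 * (φ - 1) - x) := by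
    have hinv : ((1 - x) * φ + x) * ((1 - x) * φ + x)⁻¹ = 1 := mul_inv_cancel₀ hq.ne'
    rw [← goldenRatio_sq_mul_sub_sq_eq]
    linear_combination (2 * (φ * x + φ ^ 2) * ((1 - x) * φ + x) - 1 -
      ((1 - x) * φ + x) * ((1 - x) * φ + x)⁻¹) * hinv
  rw [← sub_nonneg, ← mul_nonneg_iff_of_pos_left (pow_pos hq 2), hcleared]
  exact hfactor_nonneg

theorem f_nonpos_on_Icc :
    ∀ x ∈ Set.Icc (0 : ℝ) 1,
      ((1 + Real.sqrt 5) / 2) ^ 2 * (x + (1 + Real.sqrt 5) / 2) ^ 2 -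
          4 * ((1 + Real.sqrt 5) / 2) * x - 4 +
          ((1 + Real.sqrt 5) / 2) ^ (2 * x - 2) -
          2 * ((1 + Real.sqrt 5) / 2) ^ x * (x + (1 + Real.sqrt 5) / 2) ≤ 0 := by
  rintro x ⟨hx0, hx1⟩
  change φ ^ 2 * (x + φ) ^ 2 - 4 * φ * x - 4 + φ ^ (2 * x - 2) - 2 * φ ^ x * (x + φ) ≤ 0
  set p := φ ^ (x - 1) with hp
  have hpow : φ ^ x = φ * p := by
    rw [hp, rpow_sub goldenRatio_pos, rpow_one, mul_div_cancel₀ _ goldenRatio_ne_zero]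
  have hpow_two : φ ^ (2 * x - 2) = p ^ 2 := by
    rw [hp, ← rpow_natCast, ← rpow_mul goldenRatio_pos.le]
    ring_nf
  have hp_lower : ((1 - x) * φ + x)⁻¹ ≤ p := inv_le_rpow_sub_one goldenRatio_pos hx0 hx1
  have hp_upper : p ≤ 1 := rpow_le_one_of_one_le_of_nonpos one_lt_goldenRatio.le (by linarith)
  have key : (φ * (x + φ) - p) ^ 2 ≤ 4 * (φ * x + 1) :=
    calc (φ * (x + φ) - p) ^ 2 ≤ (φ * x + φ ^ 2 - ((1 - x) * φ + x)⁻¹) ^ 2 := by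
          apply pow_le_pow_left₀ <;> nlinarith [goldenRatio_sq, goldenRatio_pos]
      _ ≤ 4 * (φ * x + 1) := sq_goldenRatio_mul_add_sub_inv_le hx0 hx1
  rw [hpow, hpow_two]
  linear_combination key
end

section
/- Let c = (1+√5)/2 and define g(z) = 2c² + z²·(4c^(-2)·(ln c)²) - z·(2 ln c)·((c + ln z/ln c)·ln c + 2). Then g(z) ≥ 0 for all z ∈ [1, c]. -/
/-!
Write `L = log c`. Since `x ↦ x log x - x` is nondecreasing on `[1, ∞)`, the term
`-2L z (cL + log z + 2)` drops by at least `2L (cL + 3)` per unit increase of `z`, which beats the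
growth of the quadratic term `4 (L/c)² z²` on `[1, c]`; so `g` is antitone there and it suffices
to check `g c = 2 (c - L)² - 4 c L² > 0`. For the golden ratio this follows from `L < 1/2`, i.e.
from `c ^ 2 = c + 1 < e`.
-/

open Real Set
open scoped goldenRatio

noncomputable def g (c z : ℝ) : ℝ :=
  2 * c ^ 2 + z ^ 2 * (4 * c ^ (-2 : ℝ) * (log c) ^ 2) -
    z * (2 * log c) * ((c + log z / log c) * log c + 2)

lemma sub_le_mul_log_sub_mul_log {z w : ℝ} (hz : 1 ≤ z) (hzw : z ≤ w) :
    w - z ≤ w * log w - z * log z := by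
  have hz0 : 0 < z := by linarith
  have hw0 : 0 < w := by linarith
  have hratio : 1 - z / w ≤ log w - log z := by
    simpa [inv_div, log_div hw0.ne' hz0.ne'] using one_sub_inv_le_log_of_pos (div_pos hw0 hz0)
  have hlogz : 0 ≤ log z := log_nonneg hz
  calc w - z = w * (1 - z / w) := by field_simp
    _ ≤ w * (log w - log z) + (w - z) * log z := by
        linarith [mul_le_mul_of_nonneg_left hratio hw0.le, mul_nonneg (sub_nonneg.2 hzw) hlogz]
    _ = w * log w - z * log z := by ring

lemma g_eq {c : ℝ} (hc : 1 < c) (z : ℝ) :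
    g c z = 2 * c ^ 2 + 4 * (log c / c) ^ 2 * z ^ 2 -
      2 * log c * z * (c * log c + log z + 2) := by
  have hL : log c ≠ 0 := (log_pos hc).ne'
  rw [g, rpow_neg (by linarith), rpow_two]
  field_simp

lemma g_antitoneOn {c : ℝ} (hc : 1 < c) : AntitoneOn (g c) (Icc 1 c) := by
  rintro z ⟨hz1, hzc⟩ w ⟨-, hwc⟩ hzw
  set L := log c
  set u := L / c
  have hL : 0 < L := log_pos hc
  have hLc : L < c := by linarith [log_le_sub_one_of_pos (by linarith : 0 < c)]
  have huc : u * c = L := div_mul_cancel₀ L (by linarith)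
  have hslope : 4 * u ^ 2 * (z + w) ≤ 2 * L * (c * L + 3) := by
    have h4L : 4 * L ≤ c ^ 2 * L + 3 * c := by
      have : L ≤ c ^ 2 * L := le_mul_of_one_le_left hL.le (by nlinarith)
      linarith
    calc 4 * u ^ 2 * (z + w) ≤ 4 * u ^ 2 * (2 * c) := by gcongr; linarith
      _ = 2 * u * (4 * L) := by rw [← huc]; ring
      _ ≤ 2 * u * (c ^ 2 * L + 3 * c) := by gcongr
      _ = 2 * L * (c * L + 3) := by rw [← huc]; ring
  have hent := sub_le_mul_log_sub_mul_log hz1 hzw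
  rw [g_eq hc, g_eq hc]
  nlinarith [mul_le_mul_of_nonneg_left hent (by positivity : 0 ≤ 2 * L),
    mul_nonneg (sub_nonneg.2 hzw) (sub_nonneg.2 hslope)]

lemma log_goldenRatio_lt_half : log φ < 1 / 2 := by
  have hφ : φ < 1.7 := by
    have : √5 < 2.4 := by
      rw [sqrt_lt' (by norm_num)]; norm_num
    rw [goldenRatio]; linarith
  have h : log (φ ^ 2) < 1 := by
    rw [goldenRatio_sq, log_lt_iff_lt_exp (by positivity)]
    linarith [exp_one_gt_d9]
  rw [log_pow] at h
  push_cast at h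
  linarith

lemma g_self_eq_of_sq_eq_add_one {c : ℝ} (hc : 1 < c) (hsq : c ^ 2 = c + 1) :
    g c c = 2 * (c - log c) ^ 2 - 4 * c * log c ^ 2 := by
  have hc0 : c ≠ 0 := by positivity
  rw [g_eq hc]
  field_simp
  linear_combination (-2 * log c ^ 2) * hsq

lemma g_goldenRatio_self_pos : 0 < g φ φ := by
  have hL : 0 < log φ := log_pos one_lt_goldenRatio
  have hL2 := log_goldenRatio_lt_half
  have hφ2 := goldenRatio_lt_two
  rw [g_self_eq_of_sq_eq_add_one one_lt_goldenRatio goldenRatio_sq]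
  nlinarith [goldenRatio_sq, mul_pos hL (by linarith : (0 : ℝ) < 1 / 2 - log φ)]

theorem g_nonneg_on_Icc :
    let c : ℝ := (1 + Real.sqrt 5) / 2
    let g : ℝ → ℝ := fun z =>
      2 * c ^ 2 + z ^ 2 * (4 * c ^ (-2 : ℝ) * (Real.log c) ^ 2) -
        z * (2 * Real.log c) * ((c + Real.log z / Real.log c) * Real.log c + 2)
    ∀ z ∈ Set.Icc (1 : ℝ) c, 0 ≤ g z := by
  intro c _ z hz
  exact g_goldenRatio_self_pos.le.trans
    (g_antitoneOn one_lt_goldenRatio hz (right_mem_Icc.2 one_lt_goldenRatio.le) hz.2)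
end

section
/- Let c = (1+√5)/2 and θ = (ln c)/2, and define T(x) = (1/2)·(1 + exp(-2θ(1-x)) + 2·√(1 - exp(-2θx))·exp(-θ(1-x))) for x ∈ [0,1]. Then T(x)/(1+x) ≥ c/2 for all x ∈ [0,1], with equality at x = 0. -/
/-!
Write `q = e^θ = √φ`, `t = e^{-θx} ∈ [1/q, 1]` and `a = e^{-θ(1-x)} = 1/(qt)`, so that
`T(x) = (1 + a² + 2a√(1 - t²))/2`. The inequality is an equality at both `x = 0` and `x = 1`, so
`e^{θ(1-x)} = qt` is replaced by its chord `(1-x)q + x`, which is exact at both ends; this bounds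
`x` in terms of `t` and leaves an algebraic inequality in `t` alone. After squaring, modulo
`q⁴ = q² + 1`, its gap is `q(1-t)(qt-1)` times a quartic in `t` that is positive on `[1/q, 1]`.
-/

open Real goldenRatio

namespace EPR

lemma bounds_of_sq_eq_goldenRatio {q : ℝ} (hq0 : 0 < q) (hq2 : q ^ 2 = φ) :
    1.272 ≤ q ∧ q ≤ 1.273 := by
  have h5 : √5 ^ 2 = 5 := sq_sqrt (by norm_num)
  have : 2.236 ≤ √5 := by nlinarith [sqrt_nonneg 5]
  have : √5 ≤ 2.241 := by nlinarith [sqrt_nonneg 5]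
  rw [goldenRatio] at hq2
  constructor <;> nlinarith

lemma quartic_nonneg {q t : ℝ} (hq : 1.272 ≤ q) (hq' : q ≤ 1.273) (ht : 0.785 ≤ t)
    (ht1 : t ≤ 1) :
    0 ≤ (q^3-2) + (q^3+q^2-2*q-1)*t + (5-7*q+9*q^2-6*q^3)*t^2
      + (-4+q-5*q^2+4*q^3)*t^3 + (2+3*q^2)*t^4 := by
  have h1 : 0 ≤ t - 0.785 := by linarith
  have h2 : 0 ≤ 1 - t := by linarith
  have h3 : 0 ≤ q - 1.272 := by linarith
  have h4 : 0 ≤ 1.273 - q := by linarith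
  nlinarith [mul_nonneg h1 h2, mul_nonneg (mul_nonneg h1 h2) h1, mul_nonneg (mul_nonneg h1 h2) h2,
    mul_nonneg (mul_nonneg (mul_nonneg h1 h2) h1) h2, mul_nonneg h3 h4,
    mul_nonneg (mul_nonneg h3 h4) h1, mul_nonneg (mul_nonneg h3 h4) h2,
    mul_nonneg (mul_nonneg h1 h1) h3, mul_nonneg (mul_nonneg h2 h2) h3,
    sq_nonneg (t - 0.9), mul_nonneg (mul_nonneg h1 h1) (mul_nonneg h2 h2)]

lemma poly_le_mul_sqrt_one_sub_sq {q t : ℝ} (hq4 : q ^ 4 = q ^ 2 + 1) (hq : 1.272 ≤ q)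
    (hq' : q ≤ 1.273) (ht1 : t ≤ 1) (hqt : 1 ≤ q * t) :
    q^5*t^2*(1-t) + q^2*t^2*(q-1)*(q^2-1) - (q-1) ≤ 2*q*t*(q-1)*√(1 - t^2) := by
  set w := √(1 - t ^ 2)
  have hw : w ^ 2 = 1 - t ^ 2 := sq_sqrt (by nlinarith)
  have ht0 : 0 < t := by nlinarith
  have hB : 0 ≤ 2*q*t*(q-1)*w := by
    have : 0 ≤ q - 1 := by linarith
    positivity
  refine le_of_abs_le (abs_le_of_sq_le_sq (sub_nonneg.1 ?_) hB)
  have hgap : (2*q*t*(q-1)*w)^2 - (q^5*t^2*(1-t) + q^2*t^2*(q-1)*(q^2-1) - (q-1))^2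
      = q*(1-t)*(q*t-1)*((q^3-2) + (q^3+q^2-2*q-1)*t + (5-7*q+9*q^2-6*q^3)*t^2
        + (-4+q-5*q^2+4*q^3)*t^3 + (2+3*q^2)*t^4) := by
    linear_combination (1 - q*t - 6*q*t^2 + 9*q*t^3 - 6*q*t^4 + 2*q*t^5 + 4*q^2*t^2 - 2*q^2*t^3
      - 4*q^2*t^4 + 6*q^2*t^5 - 2*q^2*t^6 - 2*q^3*t^4 - q^4*t^4 + 2*q^4*t^5 - q^4*t^6
      + 4*q^5*t^4 - 2*q^5*t^5 - 4*q^6*t^4 + 4*q^6*t^5 - q^6*t^6) * hq4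
      + (4*q^2*t^2*(q-1)^2) * hw
  rw [hgap]
  have hends : 0 ≤ q * (1 - t) * (q * t - 1) := mul_nonneg (by nlinarith) (by linarith)
  exact mul_nonneg hends (quartic_nonneg hq hq' (by nlinarith) ht1)

theorem goldenRatio_mul_one_add_le {q t a x : ℝ} (hq0 : 0 < q) (hq2 : q ^ 2 = φ) (ht1 : t ≤ 1)
    (hqt : 1 ≤ q * t) (ha : a * (q * t) = 1) (hchord : q * t ≤ (1 - x) * q + x) :
    φ * (1 + x) ≤ 1 + a ^ 2 + 2 * √(1 - t ^ 2) * a := by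
  obtain ⟨hq, hq'⟩ := bounds_of_sq_eq_goldenRatio hq0 hq2
  have hq4 : q ^ 4 = q ^ 2 + 1 := by rw [show q ^ 4 = (q ^ 2) ^ 2 by ring, hq2, goldenRatio_sq]
  have hpoly := poly_le_mul_sqrt_one_sub_sq hq4 hq hq' ht1 hqt
  set w := √(1 - t ^ 2)
  have hx : x * (q - 1) ≤ q * (1 - t) := by linarith
  have hcleared : q ^ 2 * (1 + x) * (q * t) ^ 2 ≤ (q * t) ^ 2 + 1 + 2 * w * (q * t) := by
    refine le_of_mul_le_mul_left ?_ (by linarith : 0 < q - 1)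
    nlinarith [mul_le_mul_of_nonneg_left hx (by positivity : 0 ≤ q ^ 4 * t ^ 2)]
  rw [← hq2]
  calc q ^ 2 * (1 + x) = q ^ 2 * (1 + x) * (q * t) ^ 2 * a ^ 2 := by
        linear_combination (-(q ^ 2 * (1 + x)) * (a * (q * t) + 1)) * ha
    _ ≤ ((q * t) ^ 2 + 1 + 2 * w * (q * t)) * a ^ 2 := by gcongr
    _ = 1 + a ^ 2 + 2 * w * a := by linear_combination (a * (q * t) + 1 + 2 * w * a) * ha

lemma exp_mul_one_sub_le (θ : ℝ) {x : ℝ} (hx0 : 0 ≤ x) (hx1 : x ≤ 1) :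
    exp (θ * (1 - x)) ≤ (1 - x) * exp θ + x := by
  have := convexOn_exp.2 (Set.mem_univ θ) (Set.mem_univ 0) (by linarith : 0 ≤ 1 - x) hx0
    (by ring)
  simpa [mul_comm] using this

end EPR

theorem epr_per_edge_ratio :
    let c : ℝ := (1 + Real.sqrt 5) / 2
    let θ : ℝ := Real.log c / 2
    let T : ℝ → ℝ := fun x =>
      (1 / 2) * (1 + Real.exp (-(2 * θ * (1 - x))) +
        2 * Real.sqrt (1 - Real.exp (-(2 * θ * x))) * Real.exp (-(θ * (1 - x))))
    (∀ x ∈ Set.Icc (0 : ℝ) 1, c / 2 ≤ T x / (1 + x)) ∧ T 0 / (1 + 0) = c / 2 := by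
  intro c θ T
  have hθ : 0 ≤ θ := div_nonneg (log_nonneg one_lt_goldenRatio.le) zero_le_two
  have hexp_two_mul : exp (2 * θ) = φ := by
    rw [mul_div_cancel₀ _ two_ne_zero, exp_log goldenRatio_pos]
  have hq2 : exp θ ^ 2 = φ := by rw [← exp_nat_mul]; exact_mod_cast hexp_two_mul
  have hsq (y : ℝ) : exp (-(2 * θ * y)) = exp (-(θ * y)) ^ 2 := by rw [← exp_nat_mul]; ring_nf
  refine ⟨fun x ⟨hx0, hx1⟩ => ?_, ?_⟩
  · have hqt : exp θ * exp (-(θ * x)) = exp (θ * (1 - x)) := by rw [← exp_add]; ring_nf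
    have ht1 : exp (-(θ * x)) ≤ 1 := exp_le_one_iff.2 (by nlinarith)
    have hqt1 : 1 ≤ exp θ * exp (-(θ * x)) := hqt ▸ one_le_exp (by nlinarith)
    have ha : exp (-(θ * (1 - x))) * (exp θ * exp (-(θ * x))) = 1 := by
      rw [hqt, ← exp_add, neg_add_cancel, exp_zero]
    have key := EPR.goldenRatio_mul_one_add_le (exp_pos θ) hq2 ht1 hqt1 ha
      (hqt ▸ EPR.exp_mul_one_sub_le θ hx0 hx1)
    rw [le_div_iff₀ (by linarith)]
    simp only [T, hsq]
    linarith
  · show T 0 / (1 + 0) = φ / 2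
    simp only [T, mul_zero, neg_zero, exp_zero, sub_self, sqrt_zero, sub_zero, mul_one, zero_mul,
      add_zero, div_one]
    rw [exp_neg, hexp_two_mul, inv_goldenRatio]
    linarith [one_sub_goldenRatio]
end
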